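/- Let n, m, k, σ be positive integers with σ ≤ n, and let η ∈ [0,1]. Let (A_1, s_1, e_1), …, (A_k, s_k, e_k) be independent, where each A_i is drawn from (Ber(σ/n))^{m×n} (all entries independent), each s_i is uniform in F_2^n, and each e_i is drawn from (Ber(η))^m. Set A* = [A_1 | A_2 | ⋯ | A_k] ∈ F_2^{m×kn} (horizontal concatenation), s* = (s_1, …, s_k) ∈ F_2^{kn}, e* = e_1 ⊕ ⋯ ⊕ e_k, and b* = Σ_{i=1}^k (A_i·s_i + e_i) over F_2. Then b* = A*·s* + e*, and the triple (A*, s*, e*) is distributed as three independent components: A* drawn from (Ber((kσ)/(kn)))^{m×kn}, s* uniform in F_2^{kn}, and e* drawn from (Ber((1 − (1 − 2η)^k)/2))^m. -/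

import Mathlib

open MeasureTheory ProbabilityTheory
open scoped ENNReal

noncomputable instance matrixMeasurableSpace (m n q : ℕ) :
    MeasurableSpace (Matrix (Fin m) (Fin n) (ZMod q)) :=
  (inferInstance : MeasurableSpace (Fin m → Fin n → ZMod q))

/-- Horizontal concatenation `A* = [A_1 | A_2 | ⋯ | A_k]` of the `k` challenge matrices,
with columns indexed by `Fin k × Fin n ≃ F₂^{kn}`. -/
def concatMatrix (n m k : ℕ)
    (y : Fin k → Matrix (Fin m) (Fin n) (ZMod 2) × (Fin n → ZMod 2) × (Fin m → ZMod 2)) :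
    Matrix (Fin m) (Fin k × Fin n) (ZMod 2) :=
  Matrix.of fun r ji => (y ji.1).1 r ji.2

/-- Concatenated secret `s* = (s_1, …, s_k) ∈ F₂^{kn}`. -/
def concatSecret (n m k : ℕ)
    (y : Fin k → Matrix (Fin m) (Fin n) (ZMod 2) × (Fin n → ZMod 2) × (Fin m → ZMod 2)) :
    Fin k × Fin n → ZMod 2 :=
  fun ji => (y ji.1).2.1 ji.2

/-- Summed noise `e* = e_1 ⊕ ⋯ ⊕ e_k` over F₂. -/
def sumNoise (n m k : ℕ)
    (y : Fin k → Matrix (Fin m) (Fin n) (ZMod 2) × (Fin n → ZMod 2) × (Fin m → ZMod 2)) :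
    Fin m → ZMod 2 :=
  ∑ i, (y i).2.2

instance (m n q : ℕ) : MeasurableSingletonClass (Matrix (Fin m) (Fin n) (ZMod q)) :=
  (inferInstance : MeasurableSingletonClass (Fin m → Fin n → ZMod q))

lemma my_chi_add (a b : ZMod 2) :
    (if a + b = 1 then (-1:ℝ) else 1) =
      (if a = 1 then (-1:ℝ) else 1) * (if b = 1 then (-1:ℝ) else 1) := by
  rcases (show a = 0 ∨ a = 1 by revert a; decide) with rfl | rfl <;>
    rcases (show b = 0 ∨ b = 1 by revert b; decide) with rfl | rfl <;>
    simp [show (0:ZMod 2) ≠ 1 from by decide, show (1:ZMod 2) + 1 = 0 from rfl]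

lemma my_chi_sum {ι : Type*} (s : Finset ι) (v : ι → ZMod 2) :
    (if (∑ i ∈ s, v i) = 1 then (-1:ℝ) else 1) =
      ∏ i ∈ s, (if v i = 1 then (-1:ℝ) else 1) := by
  classical
  induction s using Finset.induction with
  | empty => simp
  | insert a s h ih => rw [Finset.sum_insert h, Finset.prod_insert h, my_chi_add, ih]

lemma my_pile_real (k : ℕ) (η : ℝ) (c : ZMod 2) :
    ∑ v ∈ Finset.univ.filter (fun v : Fin k → ZMod 2 => ∑ i, v i = c),
      ∏ i, (if v i = 1 then η else 1 - η) =
    (1 + (if c = 1 then (-1:ℝ) else 1) * (1 - 2*η)^k) / 2 := by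
  classical
  have h01 : (0 : ZMod 2) ≠ 1 := by decide
  have htot : ∀ g : ZMod 2 → ℝ, ∑ c : ZMod 2, g c = g 0 + g 1 := by
    intro g
    have huniv : (Finset.univ : Finset (ZMod 2)) = {0, 1} := by decide
    rw [huniv, Finset.sum_pair h01]
  have hzsum : ∀ w : ZMod 2 → ℝ,
      ∑ v : Fin k → ZMod 2, ∏ i, w (v i) = (w 0 + w 1) ^ k := by
    intro w
    rw [← Fintype.piFinset_univ, ← Finset.prod_univ_sum]
    simp [htot]
  have hsum :
      (∑ v ∈ Finset.univ.filter (fun v : Fin k → ZMod 2 => ∑ i, v i = 0),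
        ∏ i, (if v i = 1 then η else 1 - η)) +
      (∑ v ∈ Finset.univ.filter (fun v : Fin k → ZMod 2 => ∑ i, v i = 1),
        ∏ i, (if v i = 1 then η else 1 - η)) = 1 := by
    have h1 := Finset.sum_fiberwise (Finset.univ : Finset (Fin k → ZMod 2))
      (fun v => ∑ i, v i) (fun v => ∏ i, (if v i = 1 then η else 1 - η))
    rw [htot] at h1
    rw [h1, hzsum (fun x => if x = 1 then η else 1 - η)]
    simp [h01]
  have hdiff :
      (∑ v ∈ Finset.univ.filter (fun v : Fin k → ZMod 2 => ∑ i, v i = 0),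
        ∏ i, (if v i = 1 then η else 1 - η)) -
      (∑ v ∈ Finset.univ.filter (fun v : Fin k → ZMod 2 => ∑ i, v i = 1),
        ∏ i, (if v i = 1 then η else 1 - η)) = (1 - 2*η)^k := by
    have h3 : ∑ v : Fin k → ZMod 2,
        ∏ i, ((if v i = 1 then (-1:ℝ) else 1) * (if v i = 1 then η else 1 - η)) =
        (1 - 2*η)^k := by
      rw [hzsum (fun x => (if x = 1 then (-1:ℝ) else 1) * (if x = 1 then η else 1 - η))]
      have : ((if (0:ZMod 2) = 1 then (-1:ℝ) else 1) * (if (0:ZMod 2) = 1 then η else 1 - η) +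
          (if (1:ZMod 2) = 1 then (-1:ℝ) else 1) * (if (1:ZMod 2) = 1 then η else 1 - η))
          = 1 - 2*η := by simp [h01]; ring
      rw [this]
    have h5 : ∑ v : Fin k → ZMod 2,
        (if (∑ i, v i) = 1 then (-1:ℝ) else 1) * ∏ i, (if v i = 1 then η else 1 - η) =
        (1 - 2*η)^k := by
      rw [← h3]
      exact Finset.sum_congr rfl fun v _ => by
        rw [my_chi_sum, ← Finset.prod_mul_distrib]
    have h1 := Finset.sum_fiberwise (Finset.univ : Finset (Fin k → ZMod 2))
      (fun v => ∑ i, v i)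
      (fun v => (if (∑ i, v i) = 1 then (-1:ℝ) else 1) *
        ∏ i, (if v i = 1 then η else 1 - η))
    rw [htot, h5] at h1
    have hf0 : ∑ v ∈ Finset.univ.filter (fun v : Fin k → ZMod 2 => ∑ i, v i = 0),
        (if (∑ i, v i) = 1 then (-1:ℝ) else 1) * ∏ i, (if v i = 1 then η else 1 - η) =
        ∑ v ∈ Finset.univ.filter (fun v : Fin k → ZMod 2 => ∑ i, v i = 0),
        ∏ i, (if v i = 1 then η else 1 - η) := by
      refine Finset.sum_congr rfl fun v hv => ?_
      rw [(Finset.mem_filter.1 hv).2, if_neg h01, one_mul]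
    have hf1 : ∑ v ∈ Finset.univ.filter (fun v : Fin k → ZMod 2 => ∑ i, v i = 1),
        (if (∑ i, v i) = 1 then (-1:ℝ) else 1) * ∏ i, (if v i = 1 then η else 1 - η) =
        -∑ v ∈ Finset.univ.filter (fun v : Fin k → ZMod 2 => ∑ i, v i = 1),
        ∏ i, (if v i = 1 then η else 1 - η) := by
      rw [← Finset.sum_neg_distrib]
      refine Finset.sum_congr rfl fun v hv => ?_
      rw [(Finset.mem_filter.1 hv).2, if_pos rfl, neg_one_mul]
    rw [hf0, hf1] at h1
    linarith
  have hc : c = 0 ∨ c = 1 := by revert c; decide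
  rcases hc with hc | hc <;> subst hc
  · rw [if_neg h01]; linarith
  · rw [if_pos rfl]; linarith

lemma my_pile_ennreal (k : ℕ) (η : ℝ) (hη0 : 0 ≤ η) (hη1 : η ≤ 1) (c : ZMod 2) :
    ∑ v ∈ Finset.univ.filter (fun v : Fin k → ZMod 2 => ∑ i, v i = c),
      ∏ i, (if v i = 1 then ENNReal.ofReal η else ENNReal.ofReal (1 - η)) =
    ENNReal.ofReal ((1 + (if c = 1 then (-1:ℝ) else 1) * (1 - 2*η)^k) / 2) := by
  have hterm : ∀ v : Fin k → ZMod 2,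
      ∏ i, (if v i = 1 then ENNReal.ofReal η else ENNReal.ofReal (1 - η)) =
      ENNReal.ofReal (∏ i, (if v i = 1 then η else 1 - η)) := by
    intro v
    rw [ENNReal.ofReal_prod_of_nonneg (fun i _ => by split <;> linarith)]
    exact Finset.prod_congr rfl fun i _ => (apply_ite ENNReal.ofReal _ _ _).symm
  calc ∑ v ∈ Finset.univ.filter (fun v : Fin k → ZMod 2 => ∑ i, v i = c),
        ∏ i, (if v i = 1 then ENNReal.ofReal η else ENNReal.ofReal (1 - η))
      = ∑ v ∈ Finset.univ.filter (fun v : Fin k → ZMod 2 => ∑ i, v i = c),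
        ENNReal.ofReal (∏ i, (if v i = 1 then η else 1 - η)) :=
        Finset.sum_congr rfl fun v _ => hterm v
    _ = ENNReal.ofReal (∑ v ∈ Finset.univ.filter (fun v : Fin k → ZMod 2 => ∑ i, v i = c),
        ∏ i, (if v i = 1 then η else 1 - η)) :=
        (ENNReal.ofReal_sum_of_nonneg fun v _ =>
          Finset.prod_nonneg fun i _ => by split <;> linarith).symm
    _ = _ := by rw [my_pile_real]

lemma my_measure_finset {α : Type*} [MeasurableSpace α] [MeasurableSingletonClass α]
    (μ : Measure α) (F : Finset α) : μ ↑F = ∑ b ∈ F, μ {b} := by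
  have h : (↑F : Set α) = ⋃ b ∈ F, {b} := (Set.biUnion_of_singleton (↑F : Set α)).symm
  rw [h, measure_biUnion_finset ?_ fun b _ => measurableSet_singleton b]
  intro x hx y hy hxy
  simp [Function.onFun, Set.disjoint_singleton_left, hxy]

/-- **Product-to-single embedding for approximate-sparse LPN over F₂.**
Let `σ ≤ n` and let `(A_1, s_1, e_1), …, (A_k, s_k, e_k)` be independent with each
`A_i ∼ (Ber(σ/n))^{m×n}` (all entries independent), each `s_i` uniform in `F₂ⁿ`, and each
`e_i ∼ (Ber(η))^m` (this joint distribution is expressed by specifying all point masses).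
Set `A* = [A_1 | ⋯ | A_k]`, `s* = (s_1, …, s_k)`, `e* = e_1 ⊕ ⋯ ⊕ e_k` and
`b* = Σ_i (A_i·s_i + e_i)` over `F₂`.  Then `b* = A*·s* + e*` always holds, and
`(A*, s*, e*)` is distributed as three independent components:
`A* ∼ (Ber((kσ)/(kn)))^{m×kn}`, `s*` uniform in `F₂^{kn}`, and
`e* ∼ (Ber((1 - (1-2η)^k)/2))^m`. -/
theorem sparse_lpn_product_to_single_embedding
    (n m k σ : ℕ) (hn : 0 < n) (hm : 0 < m) (hk : 0 < k) (hσ : 0 < σ) (hσn : σ ≤ n)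
    (η : ℝ) (hη0 : 0 ≤ η) (hη1 : η ≤ 1)
    (μ : Measure (Fin k →
      Matrix (Fin m) (Fin n) (ZMod 2) × (Fin n → ZMod 2) × (Fin m → ZMod 2)))
    [IsProbabilityMeasure μ]
    (hμ : ∀ y, μ {y} = ∏ i,
      ((∏ r, ∏ j, (if (y i).1 r j = 1 then ENNReal.ofReal ((σ : ℝ) / n)
          else ENNReal.ofReal (1 - (σ : ℝ) / n))) *
        ((Fintype.card (Fin n → ZMod 2) : ℝ≥0∞)⁻¹ *
          ∏ r, (if (y i).2.2 r = 1 then ENNReal.ofReal η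
            else ENNReal.ofReal (1 - η))))) :
    (∀ y, (∑ i, ((y i).1.mulVec ((y i).2.1) + (y i).2.2)) =
        (concatMatrix n m k y).mulVec (concatSecret n m k y) + sumNoise n m k y) ∧
    (∀ (A : Matrix (Fin m) (Fin k × Fin n) (ZMod 2)) (s : Fin k × Fin n → ZMod 2)
        (e : Fin m → ZMod 2),
      μ {y | concatMatrix n m k y = A ∧ concatSecret n m k y = s ∧
          sumNoise n m k y = e} =
        (∏ r, ∏ j, (if A r j = 1 then ENNReal.ofReal ((k * σ : ℝ) / (k * n : ℝ))
          else ENNReal.ofReal (1 - (k * σ : ℝ) / (k * n : ℝ)))) *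
        ((Fintype.card (Fin k × Fin n → ZMod 2) : ℝ≥0∞)⁻¹ *
          ∏ r, (if e r = 1 then ENNReal.ofReal ((1 - (1 - 2 * η) ^ k) / 2)
            else ENNReal.ofReal (1 - (1 - (1 - 2 * η) ^ k) / 2)))) := by
  classical
  constructor
  · intro y
    funext r
    simp [Matrix.mulVec, dotProduct, concatMatrix, concatSecret, sumNoise,
      Finset.sum_apply, Pi.add_apply, Fintype.sum_prod_type, Finset.sum_add_distrib,
      Matrix.of_apply]
  · intro A s e
    set φ : (Fin k → Fin m → ZMod 2) →
        (Fin k → Matrix (Fin m) (Fin n) (ZMod 2) × (Fin n → ZMod 2) × (Fin m → ZMod 2)) :=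
      fun f i => (Matrix.of fun r j => A r (i, j), fun j => s (i, j), f i) with hφ
    set T : Finset (Fin k → Fin m → ZMod 2) :=
      Finset.univ.filter (fun f => ∑ i, f i = e) with hT
    have hinj : Function.Injective φ := by
      intro f g h
      funext i r
      exact congrFun (congrArg (fun p => p.2.2) (congrFun h i)) r
    have hset : {y | concatMatrix n m k y = A ∧ concatSecret n m k y = s ∧
        sumNoise n m k y = e} = ↑(T.image φ) := by
      ext y
      simp only [Set.mem_setOf_eq, Finset.coe_image, Set.mem_image, Finset.mem_coe,
        hT, Finset.mem_filter, Finset.mem_univ, true_and]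
      constructor
      · rintro ⟨hA, hs, he⟩
        have hA' : ∀ r ji, concatMatrix n m k y r ji = A r ji := fun r ji => by rw [hA]
        have hs' : ∀ ji, concatSecret n m k y ji = s ji := fun ji => by rw [hs]
        refine ⟨fun i => (y i).2.2, he, ?_⟩
        funext i
        refine Prod.ext (Matrix.ext fun r j => ?_) (Prod.ext ?_ rfl)
        · exact (hA' r (i, j)).symm
        · funext j
          exact (hs' (i, j)).symm
      · rintro ⟨f, hf, rfl⟩
        exact ⟨rfl, rfl, hf⟩
    rw [hset, my_measure_finset, Finset.sum_image fun x _ y _ h => hinj h]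
    have hpoint : ∀ f : Fin k → Fin m → ZMod 2, μ {φ f} =
        (∏ i, ∏ r, ∏ j, (if A r (i, j) = 1 then ENNReal.ofReal ((σ : ℝ) / n)
          else ENNReal.ofReal (1 - (σ : ℝ) / n))) *
        (((Fintype.card (Fin n → ZMod 2) : ℝ≥0∞))⁻¹ ^ k *
          ∏ i, ∏ r, (if f i r = 1 then ENNReal.ofReal η
            else ENNReal.ofReal (1 - η))) := by
      intro f
      rw [hμ (φ f)]
      simp only [hφ, Matrix.of_apply]
      rw [Finset.prod_mul_distrib, Finset.prod_mul_distrib, Finset.prod_const]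
      simp
    rw [Finset.sum_congr rfl fun f _ => hpoint f]
    rw [← Finset.mul_sum, ← Finset.mul_sum]
    have hkR : (k : ℝ) ≠ 0 := Nat.cast_ne_zero.mpr hk.ne'
    have hv1 : ENNReal.ofReal ((k * σ : ℝ) / (k * n : ℝ)) = ENNReal.ofReal ((σ : ℝ) / n) := by
      rw [mul_div_mul_left _ _ hkR]
    have hv2 : ENNReal.ofReal (1 - (k * σ : ℝ) / (k * n : ℝ)) =
        ENNReal.ofReal (1 - (σ : ℝ) / n) := by
      rw [mul_div_mul_left _ _ hkR]
    have hA2 : (∏ r, ∏ j, (if A r j = 1 then ENNReal.ofReal ((k * σ : ℝ) / (k * n : ℝ))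
        else ENNReal.ofReal (1 - (k * σ : ℝ) / (k * n : ℝ)))) =
        ∏ i, ∏ r, ∏ j, (if A r (i, j) = 1 then ENNReal.ofReal ((σ : ℝ) / n)
          else ENNReal.ofReal (1 - (σ : ℝ) / n)) := by
      simp_rw [hv1, hv2]
      calc ∏ r, ∏ ji : Fin k × Fin n, (if A r ji = 1 then ENNReal.ofReal ((σ : ℝ) / n)
            else ENNReal.ofReal (1 - (σ : ℝ) / n))
          = ∏ r, ∏ i, ∏ j, (if A r (i, j) = 1 then ENNReal.ofReal ((σ : ℝ) / n)
            else ENNReal.ofReal (1 - (σ : ℝ) / n)) :=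
            Finset.prod_congr rfl fun r _ => Fintype.prod_prod_type _
        _ = _ := Finset.prod_comm
    have hC2 : ((Fintype.card (Fin k × Fin n → ZMod 2) : ℝ≥0∞))⁻¹ =
        ((Fintype.card (Fin n → ZMod 2) : ℝ≥0∞))⁻¹ ^ k := by
      rw [Fintype.card_fun, Fintype.card_fun, Fintype.card_prod, Fintype.card_fin,
        Fintype.card_fin, ZMod.card]
      push_cast
      rw [← ENNReal.inv_pow, ← pow_mul, mul_comm n k]
    have hR : ∀ r : Fin m, (if e r = 1 then ENNReal.ofReal ((1 - (1 - 2 * η) ^ k) / 2)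
        else ENNReal.ofReal (1 - (1 - (1 - 2 * η) ^ k) / 2)) =
        ∑ v ∈ Finset.univ.filter (fun v : Fin k → ZMod 2 => ∑ i, v i = e r),
          ∏ i, (if v i = 1 then ENNReal.ofReal η else ENNReal.ofReal (1 - η)) := by
      intro r
      rw [my_pile_ennreal k η hη0 hη1 (e r)]
      by_cases h : e r = 1
      · rw [if_pos h, if_pos h]; congr 1; ring
      · rw [if_neg h, if_neg h]; congr 1; ring
    have hsum3 : ∑ f ∈ T, ∏ i, ∏ r, (if f i r = 1 then ENNReal.ofReal η
        else ENNReal.ofReal (1 - η)) =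
        ∏ r, (if e r = 1 then ENNReal.ofReal ((1 - (1 - 2 * η) ^ k) / 2)
          else ENNReal.ofReal (1 - (1 - (1 - 2 * η) ^ k) / 2)) := by
      have hsw : ∀ f : Fin k → Fin m → ZMod 2,
          (∏ i : Fin k, ∏ r : Fin m, (if f i r = 1 then ENNReal.ofReal η
            else ENNReal.ofReal (1 - η))) =
          ∏ r : Fin m, ∏ i : Fin k, (if f i r = 1 then ENNReal.ofReal η
            else ENNReal.ofReal (1 - η)) := fun f => Finset.prod_comm
      rw [Finset.sum_congr rfl fun f _ => hsw f]
      rw [Finset.prod_congr rfl fun r _ => hR r, Finset.prod_univ_sum]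
      refine Finset.sum_nbij' (fun f => fun r i => f i r) (fun g => fun i r => g r i)
        ?_ ?_ (fun f _ => rfl) (fun g _ => rfl) (fun f _ => rfl)
      · intro f hf
        rw [hT, Finset.mem_filter] at hf
        rw [Fintype.mem_piFinset]
        intro r
        rw [Finset.mem_filter]
        refine ⟨Finset.mem_univ _, ?_⟩
        simpa using congrFun hf.2 r
      · intro g hg
        rw [Fintype.mem_piFinset] at hg
        rw [hT, Finset.mem_filter]
        refine ⟨Finset.mem_univ _, ?_⟩
        funext r
        simpa using (Finset.mem_filter.1 (hg r)).2
    rw [hA2, hC2, hsum3]
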